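/- Let N ≥ 1, let L be an affine subspace of dimension m of the space of real symmetric N×N matrices, and let S = L ∩ { positive semidefinite matrices }. Then every extreme point θ of S satisfies m + r(r+1)/2 ≤ N(N+1)/2, where r = rank θ. -/

import Mathlib

/-!
Write `θ = V Vᵀ` with `V : ℝ^{N×r}` left invertible, `r = rank θ`. For every symmetric `r×r`
matrix `B`, `θ ± ε V B Vᵀ = V (1 ± ε B) Vᵀ` is positive semidefinite for small `ε`, so if `V B Vᵀ`
were a nonzero direction of `L`, then `θ` would be the midpoint of a segment in `S`. Hence the
`r(r+1)/2`-dimensional space `{V B Vᵀ}` meets the `m`-dimensional direction of `L` trivially inside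
the `N(N+1)/2`-dimensional space of symmetric matrices.
-/

open Matrix Filter Topology

theorem Submodule.finrank_add_finrank_le_of_disjoint_of_le {K V : Type*} [DivisionRing K]
    [AddCommGroup V] [Module K V] [FiniteDimensional K V] {s t T : Submodule K V}
    (hs : s ≤ T) (ht : t ≤ T) (hst : Disjoint s t) :
    Module.finrank K s + Module.finrank K t ≤ Module.finrank K T := by
  rw [← finrank_sup_add_finrank_inf_eq, hst.eq_bot, finrank_bot, add_zero]
  exact finrank_mono (sup_le hs ht)

theorem AffineSubspace.disjoint_direction_of_mem_extremePoints {E : Type*} [AddCommGroup E]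
    [Module ℝ E] {L : AffineSubspace ℝ E} {K : Set E} {θ : E}
    (hθ : θ ∈ ((L : Set E) ∩ K).extremePoints ℝ) {F : Submodule ℝ E}
    (hF : ∀ w ∈ F, ∀ᶠ s : ℝ in 𝓝 0, θ + s • w ∈ K) : Disjoint L.direction F := by
  rw [Submodule.disjoint_def]
  intro w hwL hwF
  obtain ⟨ε, ⟨hplus, hminus⟩, hε⟩ :=
    (((hF w hwF).and (hF (-w) (neg_mem hwF))).filter_mono nhdsWithin_le_nhds |>.and
      (self_mem_nhdsWithin (s := Set.Ioi 0))).exists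
  have hmem (s : ℝ) : θ + s • w ∈ L :=
    add_comm θ _ ▸ L.vadd_mem_of_mem_direction (L.direction.smul_mem s hwL) hθ.1.1
  have hseg : θ ∈ openSegment ℝ (θ + ε • -w) (θ + ε • w) :=
    ⟨1 / 2, 1 / 2, by norm_num, by norm_num, by norm_num, by module⟩
  have hεw : θ + ε • -w = θ :=
    hθ.2 ⟨by simpa using hmem (-ε), hminus⟩ ⟨hmem ε, hplus⟩ hseg
  simpa [hε.ne'] using hεw

namespace Matrix

section Symmetric

variable (n R : Type*) [CommRing R]

def symmetricSubmodule : Submodule R (Matrix n n R) where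
  carrier := {A | A.IsSymm}
  add_mem' := IsSymm.add
  zero_mem' := isSymm_zero
  smul_mem' c _ hA := hA.smul c

variable {n R} in
@[simp] lemma mem_symmetricSubmodule {A : Matrix n n R} :
    A ∈ symmetricSubmodule n R ↔ A.IsSymm :=
  Iff.rfl

def symmetricSubmoduleEquivSym2 : symmetricSubmodule n R ≃ₗ[R] (Sym2 n → R) where
  toFun A := Sym2.lift ⟨A.1, fun i j => (A.2.apply i j).symm⟩
  map_add' _ _ := by ext z; induction z using Sym2.ind; rfl
  map_smul' _ _ := by ext z; induction z using Sym2.ind; rfl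
  invFun f := ⟨of fun i j => f s(i, j), IsSymm.ext fun i j => by simp [Sym2.eq_swap]⟩
  left_inv _ := rfl
  right_inv f := by ext z; induction z using Sym2.ind; rfl

theorem finrank_symmetricSubmodule [Fintype n] [StrongRankCondition R] :
    Module.finrank R (symmetricSubmodule n R) = Fintype.card n * (Fintype.card n + 1) / 2 := by
  rw [(symmetricSubmoduleEquivSym2 n R).finrank_eq, Module.finrank_fintype_fun_eq_card,
    Sym2.card, Nat.choose_two_right, Nat.add_sub_cancel, Nat.mul_comm]

end Symmetric

section Congruence

variable {m n R : Type*} [Fintype n] [CommRing R]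

def congruenceLinearMap (V : Matrix m n R) : Matrix n n R →ₗ[R] Matrix m m R where
  toFun B := V * B * Vᵀ
  map_add' B C := by rw [Matrix.mul_add, Matrix.add_mul]
  map_smul' c B := by rw [Matrix.mul_smul, Matrix.smul_mul, RingHom.id_apply]

@[simp] lemma congruenceLinearMap_apply (V : Matrix m n R) (B : Matrix n n R) :
    congruenceLinearMap V B = V * B * Vᵀ :=
  rfl

theorem congruenceLinearMap_injective [Fintype m] [DecidableEq n] {V : Matrix m n R}
    {W : Matrix n m R} (hWV : W * V = 1) : Function.Injective (congruenceLinearMap V) := by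
  intro B C h
  have key (X : Matrix n n R) : W * congruenceLinearMap V X * Wᵀ = X := by
    rw [congruenceLinearMap_apply, ← Matrix.mul_assoc, ← Matrix.mul_assoc, hWV,
      Matrix.one_mul, Matrix.mul_assoc, ← transpose_mul, hWV, transpose_one, Matrix.mul_one]
  rw [← key B, ← key C, h]

theorem map_congruenceLinearMap_symmetricSubmodule_le (V : Matrix m n R) :
    (symmetricSubmodule n R).map (congruenceLinearMap V) ≤ symmetricSubmodule m R := by
  rintro _ ⟨B, hB, rfl⟩
  simp only [mem_symmetricSubmodule, IsSymm, congruenceLinearMap_apply, transpose_mul,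
    transpose_transpose, (mem_symmetricSubmodule.1 hB).eq, Matrix.mul_assoc]

theorem finrank_map_congruenceLinearMap_symmetricSubmodule [Fintype m] [DecidableEq n]
    [StrongRankCondition R] {V : Matrix m n R} {W : Matrix n m R} (hWV : W * V = 1) :
    Module.finrank R ((symmetricSubmodule n R).map (congruenceLinearMap V)) =
      Fintype.card n * (Fintype.card n + 1) / 2 := by
  rw [← (Submodule.equivMapOfInjective _ (congruenceLinearMap_injective hWV) _).finrank_eq,
    finrank_symmetricSubmodule]

end Congruence

section PosSemidef

variable {n ι : Type*} [Fintype n]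

open scoped ComplexOrder in
theorem IsHermitian.eventually_posSemidef_one_add_smul [DecidableEq n] {𝕜 : Type*} [RCLike 𝕜]
    {B : Matrix n n 𝕜} (hB : B.IsHermitian) : ∀ᶠ s : ℝ in 𝓝 0, (1 + s • B).PosSemidef := by
  set U : Matrix n n 𝕜 := (hB.eigenvectorUnitary : Matrix n n 𝕜)
  have hU : U * Uᴴ = 1 := mem_unitaryGroup_iff.mp hB.eigenvectorUnitary.2
  have hdiag (s : ℝ) :
      1 + s • B = U * diagonal (RCLike.ofReal ∘ (1 + s • hB.eigenvalues)) * Uᴴ := by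
    have hD : diagonal (RCLike.ofReal ∘ (1 + s • hB.eigenvalues)) =
        1 + s • diagonal (RCLike.ofReal ∘ hB.eigenvalues : n → 𝕜) := by
      ext i j
      rcases eq_or_ne i j with rfl | hij
      · simp [RCLike.real_smul_eq_coe_mul]
      · simp [hij]
    conv_lhs => rw [hB.spectral_theorem, Unitary.conjStarAlgAut_apply, ← hU]
    rw [hD, mul_add, add_mul, mul_one, mul_smul_comm, smul_mul_assoc, star_eq_conjTranspose]
  have hpos : ∀ᶠ s : ℝ in 𝓝 0, ∀ i, 0 < (1 + s • hB.eigenvalues) i := by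
    refine eventually_all.2 fun i => ?_
    exact (continuous_const.add (continuous_id.mul continuous_const)).tendsto' 0 1 (by simp)
      |>.eventually_const_lt one_pos
  filter_upwards [hpos] with s hs
  rw [hdiag]
  exact (PosSemidef.diagonal fun i => RCLike.ofReal_nonneg.2 (hs i).le).mul_mul_conjTranspose_same U

theorem PosSemidef.exists_fullRankFactor_eigenvalues_ne_zero [DecidableEq n] {A : Matrix n n ℝ}
    (hA : A.PosSemidef) :
    ∃ (V : Matrix n {k // hA.isHermitian.eigenvalues k ≠ 0} ℝ)
      (W : Matrix {k // hA.isHermitian.eigenvalues k ≠ 0} n ℝ),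
      W * V = 1 ∧ V * Vᵀ = A := by
  set d := hA.isHermitian.eigenvalues
  set U : Matrix n n ℝ := (hA.isHermitian.eigenvectorUnitary : Matrix n n ℝ)
  have hUU : Uᵀ * U = 1 := by
    simpa [star_eq_conjTranspose] using mem_unitaryGroup_iff'.mp hA.isHermitian.eigenvectorUnitary.2
  have hA_eq : A = U * diagonal d * Uᵀ := by
    simpa [Unitary.conjStarAlgAut_apply, star_eq_conjTranspose]
      using hA.isHermitian.spectral_theorem
  have hsqrt (k : {k // d k ≠ 0}) : 0 < √(d k) :=
    Real.sqrt_pos.2 ((hA.eigenvalues_nonneg k).lt_of_ne' k.2)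
  refine ⟨of fun i k => U i k * √(d k), of fun k i => U i k / √(d k), ?_, ?_⟩
  · ext k l
    have hUU_kl := congrFun (congrFun hUU k) l
    simp only [mul_apply, transpose_apply] at hUU_kl
    calc ∑ i, U i k / √(d k) * (U i l * √(d l)) = (∑ i, U i k * U i l) * (√(d l) / √(d k)) := by
          rw [Finset.sum_mul]
          exact Finset.sum_congr rfl fun i _ => by ring
      _ = (1 : Matrix _ _ ℝ) k l := by
          rw [hUU_kl]
          rcases eq_or_ne k l with rfl | hkl
          · simp [(hsqrt k).ne']
          · simp [hkl, Subtype.val_injective.ne hkl]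
  · ext i j
    calc ∑ k : {k // d k ≠ 0}, U i k * √(d k) * (U j k * √(d k))
        = ∑ k : {k // d k ≠ 0}, U i k * d k * U j k :=
          Finset.sum_congr rfl fun k _ => by
            rw [mul_mul_mul_comm, Real.mul_self_sqrt (hA.eigenvalues_nonneg k)]
            ring
      _ = ∑ k, U i k * d k * U j k := by
          rw [← Fintype.sum_subtype_add_sum_subtype (fun k => d k ≠ 0),
            Fintype.sum_eq_zero (fun k : {k // ¬d k ≠ 0} => _) fun k => by simp [not_not.1 k.2],
            add_zero]
      _ = A i j := by
          rw [hA_eq, mul_apply]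
          simp only [mul_diagonal, transpose_apply]

theorem PosSemidef.exists_fullRankFactor [DecidableEq n] {A : Matrix n n ℝ} (hA : A.PosSemidef) :
    ∃ (V : Matrix n (Fin A.rank) ℝ) (W : Matrix (Fin A.rank) n ℝ), W * V = 1 ∧ V * Vᵀ = A := by
  obtain ⟨V, W, hWV, hVV⟩ := hA.exists_fullRankFactor_eigenvalues_ne_zero
  let e := Fintype.equivFinOfCardEq hA.isHermitian.rank_eq_card_non_zero_eigs.symm
  refine ⟨V.submatrix id e.symm, W.submatrix e.symm id, ?_, ?_⟩
  · rw [← submatrix_mul _ _ _ _ _ Function.bijective_id, hWV, submatrix_one_equiv]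
  · rw [transpose_submatrix, submatrix_mul_equiv, hVV, submatrix_id_id]

theorem eventually_posSemidef_mul_transpose_add_smul [Fintype ι] [DecidableEq ι] (V : Matrix n ι ℝ)
    {B : Matrix ι ι ℝ} (hB : B.IsSymm) :
    ∀ᶠ s : ℝ in 𝓝 0, (V * Vᵀ + s • congruenceLinearMap V B).PosSemidef := by
  filter_upwards [(isHermitian_iff_isSymm.2 hB).eventually_posSemidef_one_add_smul] with s hs
  have h := hs.mul_mul_conjTranspose_same V
  rwa [conjTranspose_eq_transpose_of_trivial, Matrix.mul_add, Matrix.add_mul, Matrix.mul_one,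
    Matrix.mul_smul, Matrix.smul_mul, ← congruenceLinearMap_apply] at h

end PosSemidef

end Matrix

theorem pataki_extreme_point_rank_bound_general
    (N : ℕ) (m : ℕ)
    (L : AffineSubspace ℝ (Matrix (Fin N) (Fin N) ℝ))
    (hLsymm : ∀ A ∈ L, A.IsSymm)
    (hLdim : Module.finrank ℝ L.direction = m)
    (S : Set (Matrix (Fin N) (Fin N) ℝ))
    (hS : S = {A | A ∈ L ∧ A.PosSemidef})
    (θ : Matrix (Fin N) (Fin N) ℝ)
    (hθ : θ ∈ Set.extremePoints ℝ S) :
    m + θ.rank * (θ.rank + 1) / 2 ≤ N * (N + 1) / 2 := by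
  subst hS
  obtain ⟨V, W, hWV, hVθ⟩ := hθ.1.2.exists_fullRankFactor
  have hdisj : Disjoint L.direction
      ((symmetricSubmodule (Fin θ.rank) ℝ).map (congruenceLinearMap V)) := by
    refine L.disjoint_direction_of_mem_extremePoints (K := {A | A.PosSemidef}) hθ ?_
    rintro _ ⟨B, hB, rfl⟩
    simpa only [← hVθ, Set.mem_ofPred_eq] using eventually_posSemidef_mul_transpose_add_smul V hB
  have hdir : L.direction ≤ symmetricSubmodule (Fin N) ℝ :=
    AffineSubspace.direction_le (s₂ := (symmetricSubmodule (Fin N) ℝ).toAffineSubspace) hLsymm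
      |>.trans_eq (Submodule.toAffineSubspace_direction _)
  have hcount := Submodule.finrank_add_finrank_le_of_disjoint_of_le hdir
    (map_congruenceLinearMap_symmetricSubmodule_le V) hdisj
  rwa [hLdim, finrank_map_congruenceLinearMap_symmetricSubmodule hWV, finrank_symmetricSubmodule,
    Fintype.card_fin, Fintype.card_fin] at hcount

/-- **Pataki.** If `L` is an `m`-dimensional affine subspace of the space of real
symmetric `N×N` matrices and `S = L ∩ {psd matrices}`, then every extreme point `θ`
of `S` satisfies `m + r(r+1)/2 ≤ N(N+1)/2` where `r = rank θ`. -/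
theorem pataki_extreme_point_rank_bound
    (N : ℕ) (hN : 1 ≤ N) (m : ℕ)
    (L : AffineSubspace ℝ (Matrix (Fin N) (Fin N) ℝ))
    (hLsymm : ∀ A ∈ L, A.IsSymm)
    (hLdim : Module.finrank ℝ L.direction = m)
    (S : Set (Matrix (Fin N) (Fin N) ℝ))
    (hS : S = {A | A ∈ L ∧ A.PosSemidef})
    (θ : Matrix (Fin N) (Fin N) ℝ)
    (hθ : θ ∈ Set.extremePoints ℝ S) :
    m + θ.rank * (θ.rank + 1) / 2 ≤ N * (N + 1) / 2 :=
  pataki_extreme_point_rank_bound_general N m L hLsymm hLdim S hS θ hθ
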